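/- arXiv:2510.19337 — 2 statements merged into one kernel-verified Lean document; each statement's English description precedes it below -/
import Mathlib

section
/- Let (X,d) be a compact metric space and f : X → X a continuous map. Then (X,f) has the shadowing property if and only if the hyperspace system (K(X), f̄) has the shadowing property. -/
open Metric EMetric Bornology TopologicalSpace Set

/-- The induced map `f̄` on the hyperspace of nonempty compact subsets,
`f̄(K) = f(K)`. -/
def barMap {X : Type*} [MetricSpace X] (f : X → X) (hf : Continuous f)
    (K : TopologicalSpace.NonemptyCompacts X) : TopologicalSpace.NonemptyCompacts X :=
  ⟨⟨f '' (K : Set X), K.isCompact.image hf⟩, K.nonempty.image f⟩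

/-- The system `(Y, g)` has the (full) shadowing property. -/
def ShadowingProperty {Y : Type*} [MetricSpace Y] (g : Y → Y) : Prop :=
  ∀ ε : ℝ, 0 < ε → ∃ δ : ℝ, 0 < δ ∧
    ∀ c : ℕ → Y, (∀ j : ℕ, dist (g (c j)) (c (j + 1)) < δ) →
      ∃ x : Y, ∀ j : ℕ, dist (g^[j] x) (c j) < ε

lemma barMap_iterate_coe {X : Type*} [MetricSpace X] (f : X → X) (hf : Continuous f)
    (K : TopologicalSpace.NonemptyCompacts X) (n : ℕ) :
    (((barMap f hf)^[n] K : TopologicalSpace.NonemptyCompacts X) : Set X)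
      = f^[n] '' (K : Set X) := by
  induction n with
  | zero => simp
  | succ n ih =>
    rw [Function.iterate_succ_apply']
    show f '' (((barMap f hf)^[n] K : TopologicalSpace.NonemptyCompacts X) : Set X) = _
    rw [ih, Function.iterate_succ' f n, Set.image_comp]

/-- forward chains through a sequence of sets, given a one-step existence. -/
lemma chain_of_step {X : Type*} (K : ℕ → Set X) (P : ℕ → X → X → Prop)
    (h : ∀ n, ∀ x ∈ K n, ∃ w ∈ K (n + 1), P n x w) (j : ℕ) (y : X) (hy : y ∈ K j) :
    ∃ F : ℕ → X, F 0 = y ∧ (∀ k, F k ∈ K (j + k)) ∧ ∀ k, P (j + k) (F k) (F (k + 1)) := by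
  choose g hg1 hg2 using h
  let H : ∀ k : ℕ, {x : X // x ∈ K (j + k)} := fun k =>
    Nat.rec ⟨y, hy⟩ (fun k ih => ⟨g (j + k) ih.1 ih.2, hg1 _ _ _⟩) k
  exact ⟨fun k => (H k).1, rfl, fun k => (H k).2, fun k => hg2 (j + k) (H k).1 (H k).2⟩

/-- finite backward chains through a sequence of sets. -/
lemma backchain_of_step {X : Type*} (K : ℕ → Set X) (P : ℕ → X → X → Prop)
    (h : ∀ n, ∀ y ∈ K (n + 1), ∃ x ∈ K n, P n x y) :
    ∀ j : ℕ, ∀ y ∈ K j, ∃ z : ℕ → X, z j = y ∧ (∀ i, i ≤ j → z i ∈ K i) ∧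
      ∀ i, i < j → P i (z i) (z (i + 1)) := by
  intro j
  induction j with
  | zero =>
    intro y hy
    exact ⟨fun _ => y, rfl, fun i hi => by simpa [Nat.le_zero.mp hi] using hy,
      fun i hi => absurd hi (Nat.not_lt_zero i)⟩
  | succ j ih =>
    intro y hy
    obtain ⟨x, hx, hPx⟩ := h j y hy
    obtain ⟨z, hzj, hzK, hzP⟩ := ih x hx
    refine ⟨fun i => if i ≤ j then z i else y, by simp, ?_, ?_⟩
    · intro i hi
      by_cases h' : i ≤ j
      · simpa [h'] using hzK i h'
      · have : i = j + 1 := le_antisymm hi (Nat.succ_le_of_lt (Nat.lt_of_not_le h'))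
        simpa [h', this] using hy
    · intro i hi
      rcases Nat.lt_succ_iff_lt_or_eq.mp hi with h' | h'
      · have h1 : i ≤ j := le_of_lt h'
        have h2 : i + 1 ≤ j := h'
        simpa [h1, h2] using hzP i h'
      · subst h'
        have h1 : i ≤ i := le_rfl
        simpa [h1, hzj] using hPx

/-- anchored two-sided chains. -/
lemma anchored_chain {X : Type*} [MetricSpace X] (f : X → X) (K : ℕ → Set X) {δ : ℝ}
    (hK : ∀ n, (K n).Nonempty)
    (hfwd : ∀ n, ∀ x ∈ K n, ∃ w ∈ K (n + 1), dist (f x) w < δ)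
    (hbwd : ∀ n, ∀ y ∈ K (n + 1), ∃ x ∈ K n, dist (f x) y < δ)
    (j : ℕ) (y : X) (hy : y ∈ K j) :
    ∃ z : ℕ → X, z j = y ∧ (∀ i, z i ∈ K i) ∧ ∀ i, dist (f (z i)) (z (i + 1)) < δ := by
  obtain ⟨b, hbj, hbK, hbP⟩ :=
    backchain_of_step K (fun n x w => dist (f x) w < δ) hbwd j y hy
  obtain ⟨F, hF0, hFK, hFP⟩ :=
    chain_of_step K (fun n x w => dist (f x) w < δ) hfwd j y hy
  refine ⟨fun i => if i ≤ j then b i else F (i - j), ?_, ?_, ?_⟩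
  · simp [hbj]
  · intro i
    by_cases h' : i ≤ j
    · simpa [h'] using hbK i h'
    · have hji : j ≤ i := le_of_not_ge h'
      have := hFK (i - j)
      rw [Nat.add_sub_cancel' hji] at this
      simpa [h'] using this
  · intro i
    by_cases h2 : i + 1 ≤ j
    · have h1 : i ≤ j := le_of_lt h2
      simpa [h1, h2] using hbP i h2
    · by_cases h1 : i ≤ j
      · -- i = j
        have hij : i = j := le_antisymm h1 (by omega)
        subst hij
        have := hFP 0
        simp only [Nat.add_zero, hF0] at this
        have e1 : i + 1 - i = 1 := by omega
        simpa [h1, h2, hbj, e1] using this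
      · have hji : j ≤ i := le_of_not_ge h1
        have := hFP (i - j)
        have e1 : i + 1 - j = (i - j) + 1 := by omega
        simpa [h1, h2, e1] using this

/-- For a compact metric space, `(X,f)` has the shadowing property iff the
hyperspace system `(K(X), f̄)` has the shadowing property. -/
theorem shadowing_iff_hyperspace_of_compact {X : Type*} [MetricSpace X] [CompactSpace X]
    (f : X → X) (hf : Continuous f) :
    ShadowingProperty f ↔ ShadowingProperty (barMap f hf) := by
  constructor
  · -- hard direction
    intro hsh ε hε
    obtain ⟨δ, hδ, hδsh⟩ := hsh (ε / 2) (by linarith)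
    refine ⟨δ, hδ, ?_⟩
    intro K hKps
    -- reinterpret pseudo-orbit condition
    have hd : ∀ j, hausdorffDist (f '' (K j : Set X)) (K (j + 1) : Set X) < δ := by
      intro j
      have := hKps j
      rwa [NonemptyCompacts.dist_eq] at this
    have hne : ∀ j, hausdorffEdist (f '' (K j : Set X)) (K (j + 1) : Set X) ≠ ⊤ := fun j =>
      hausdorffEdist_ne_top_of_nonempty_of_bounded ((K j).nonempty.image f) (K (j + 1)).nonempty
        (((K j).isCompact.image hf).isBounded) (K (j + 1)).isCompact.isBounded
    have hfwd : ∀ n, ∀ x ∈ (K n : Set X), ∃ w ∈ (K (n + 1) : Set X), dist (f x) w < δ := by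
      intro n x hx
      exact exists_dist_lt_of_hausdorffDist_lt (Set.mem_image_of_mem f hx) (hd n) (hne n)
    have hbwd : ∀ n, ∀ y ∈ (K (n + 1) : Set X), ∃ x ∈ (K n : Set X), dist (f x) y < δ := by
      intro n y hy
      obtain ⟨w, hw, hwd⟩ := exists_dist_lt_of_hausdorffDist_lt' hy (hd n) (hne n)
      obtain ⟨x, hx, rfl⟩ := hw
      exact ⟨x, hx, hwd⟩
    have hchain := anchored_chain f (fun n => (K n : Set X)) (fun n => (K n).nonempty) hfwd hbwd
    -- T : the shadowing compact set
    set T : Set X := {x : X | ∀ i, infDist (f^[i] x) (K i : Set X) ≤ ε / 2} with hT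
    have hTclosed : IsClosed T := by
      have : T = ⋂ i, (fun x => infDist (f^[i] x) (K i : Set X)) ⁻¹' Set.Iic (ε / 2) := by
        ext x; simp [hT]
      rw [this]
      exact isClosed_iInter fun i =>
        IsClosed.preimage ((continuous_infDist_pt _).comp (hf.iterate i)) isClosed_Iic
    -- shadowing points of anchored chains lie in T
    have hshadow : ∀ j : ℕ, ∀ y ∈ (K j : Set X),
        ∃ x ∈ T, dist (f^[j] x) y < ε / 2 := by
      intro j y hy
      obtain ⟨z, hzj, hzK, hzP⟩ := hchain j y hy
      obtain ⟨x, hx⟩ := hδsh z hzP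
      refine ⟨x, fun i => le_of_lt (lt_of_le_of_lt (infDist_le_dist_of_mem (hzK i)) (hx i)), ?_⟩
      simpa [hzj] using hx j
    have hTne : T.Nonempty := by
      obtain ⟨y, hy⟩ := (K 0).nonempty
      obtain ⟨x, hx, -⟩ := hshadow 0 y hy
      exact ⟨x, hx⟩
    refine ⟨⟨⟨T, hTclosed.isCompact⟩, hTne⟩, ?_⟩
    intro j
    rw [NonemptyCompacts.dist_eq, barMap_iterate_coe]
    have hle : hausdorffDist (f^[j] '' T) (K j : Set X) ≤ ε / 2 := by
      apply hausdorffDist_le_of_mem_dist (by linarith)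
      · rintro x ⟨t, ht, rfl⟩
        obtain ⟨y, hy, hyd⟩ :=
          (K j).isCompact.exists_infDist_eq_dist (K j).nonempty (f^[j] t)
        exact ⟨y, hy, by rw [← hyd]; exact ht j⟩
      · intro y hy
        obtain ⟨x, hx, hxd⟩ := hshadow j y hy
        refine ⟨f^[j] x, Set.mem_image_of_mem _ hx, ?_⟩
        rw [dist_comm]
        exact le_of_lt hxd
    exact lt_of_le_of_lt hle (by linarith)
  · -- easy direction
    intro hsh ε hε
    obtain ⟨δ, hδ, hδsh⟩ := hsh ε hε
    refine ⟨δ, hδ, ?_⟩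
    intro c hc
    set C : ℕ → TopologicalSpace.NonemptyCompacts X :=
      fun j => ⟨⟨{c j}, isCompact_singleton⟩, Set.singleton_nonempty _⟩ with hC
    have hCps : ∀ j, dist (barMap f hf (C j)) (C (j + 1)) < δ := by
      intro j
      rw [NonemptyCompacts.dist_eq]
      have h1 : hausdorffDist (f '' ({c j} : Set X)) ({c (j + 1)} : Set X)
          ≤ dist (f (c j)) (c (j + 1)) := by
        apply hausdorffDist_le_of_mem_dist dist_nonneg
        · rintro x ⟨t, ht, rfl⟩
          rw [Set.mem_singleton_iff] at ht
          exact ⟨c (j + 1), rfl, by rw [ht]⟩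
        · rintro y (rfl : y = c (j + 1))
          exact ⟨f (c j), ⟨c j, rfl, rfl⟩, le_of_eq (dist_comm _ _)⟩
      exact lt_of_le_of_lt h1 (hc j)
    obtain ⟨Knc, hK⟩ := hδsh C hCps
    obtain ⟨x, hx⟩ := Knc.nonempty
    refine ⟨x, fun j => ?_⟩
    have := hK j
    rw [NonemptyCompacts.dist_eq, barMap_iterate_coe] at this
    have hmem : f^[j] x ∈ f^[j] '' (Knc : Set X) := Set.mem_image_of_mem _ hx
    have hnetop : hausdorffEdist (f^[j] '' (Knc : Set X)) ({c j} : Set X) ≠ ⊤ :=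
      hausdorffEdist_ne_top_of_nonempty_of_bounded (Knc.nonempty.image _)
        (Set.singleton_nonempty _) ((Knc.isCompact.image (hf.iterate j)).isBounded)
        isBounded_singleton
    obtain ⟨y, hy, hyd⟩ := exists_dist_lt_of_hausdorffDist_lt hmem this hnetop
    have hyc : y = c j := hy
    rwa [hyc] at hyd
end

section
/- Let (X,d) be a metric space and f : X → X a continuous map. If (X,f) is chain recurrent, then for every N ≥ 1 the N-fold product of the hyperspace system, (K(X)^N, (f̄)_(N)), is chain recurrent. -/
/-- `(c j)_{j=0}^n` is a δ-chain for `g`:  `dist (g (c j)) (c (j+1)) < δ` for `j < n`. -/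
def IsDeltaChain {Y : Type*} [MetricSpace Y] (g : Y → Y) (δ : ℝ) (n : ℕ) (c : ℕ → Y) : Prop :=
  ∀ j < n, dist (g (c j)) (c (j + 1)) < δ

/-- The system `(Y, g)` is chain recurrent. -/
def ChainRecurrent {Y : Type*} [MetricSpace Y] (g : Y → Y) : Prop :=
  ∀ x : Y, ∀ δ : ℝ, 0 < δ →
    ∃ n : ℕ, 1 ≤ n ∧ ∃ c : ℕ → Y, c 0 = x ∧ c n = x ∧ IsDeltaChain g δ n c

/-- The `N`-fold product map `g_(N)` acting on `Fin N → Y`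
(the Pi metric on `Fin N → Y` is the sup metric `d_(N)`). -/
def prodMap {Y : Type*} (g : Y → Y) (N : ℕ) : (Fin N → Y) → (Fin N → Y) :=
  fun x i => g (x i)

/-- The periodic extension of a cyclic `δ`-chain is still a `δ`-chain. -/
lemma mod_chain {Y : Type*} [MetricSpace Y] (g : Y → Y) (δ : ℝ) {n : ℕ} {c : ℕ → Y}
    (hn : 0 < n) (hc : ∀ j < n, dist (g (c j)) (c (j + 1)) < δ) (hper : c n = c 0) :
    ∀ j : ℕ, dist (g (c (j % n))) (c ((j + 1) % n)) < δ := by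
  intro j
  have hr : j % n < n := Nat.mod_lt _ hn
  have h2 : (j + 1) % n = (j % n + 1) % n := (Nat.mod_add_mod j n 1).symm
  have key : c ((j + 1) % n) = c (j % n + 1) := by
    rw [h2]
    rcases eq_or_lt_of_le (Nat.succ_le_of_lt hr) with h1 | h1
    · have h1' : j % n + 1 = n := h1
      rw [h1', Nat.mod_self]
      exact hper.symm
    · rw [Nat.mod_eq_of_lt h1]
  rw [key]
  exact hc _ hr

/-- A finite product of copies of a chain recurrent system is chain recurrent. -/
lemma prod_chainRecurrent {Y : Type*} [MetricSpace Y] {g : Y → Y}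
    (h : ChainRecurrent g) (N : ℕ) : ChainRecurrent (prodMap g N) := by
  intro x δ hδ
  choose n hn c hc0 hcn hchain using fun i : Fin N => h (x i) δ hδ
  refine ⟨∏ i, n i, Finset.one_le_prod' fun i _ => hn i, fun j i => c i (j % n i), ?_, ?_, ?_⟩
  · funext i; simp [hc0 i]
  · funext i
    have hdvd : n i ∣ ∏ i, n i := Finset.dvd_prod_of_mem n (Finset.mem_univ i)
    show c i ((∏ i, n i) % n i) = x i
    rw [Nat.mod_eq_zero_of_dvd hdvd, hc0 i]
  · intro j _
    rw [show prodMap g N (fun i => c i (j % n i)) = fun i => g (c i (j % n i)) from rfl,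
      dist_pi_lt_iff hδ]
    intro i
    have hper : c i (n i) = c i 0 := by rw [hcn i, hc0 i]
    exact mod_chain g δ (hn i) (hchain i) hper j

/-- Chain recurrence passes to the hyperspace. -/
lemma hyper_chainRecurrent {X : Type*} [MetricSpace X] {f : X → X} (hf : Continuous f)
    (h : ChainRecurrent f) : ChainRecurrent (barMap f hf) := by
  intro K δ hδ
  have hδ3 : (0:ℝ) < δ / 3 := by linarith
  obtain ⟨δ₁, hδ₁, hu⟩ := Metric.uniformContinuousOn_iff.1
    (K.isCompact.uniformContinuousOn_of_continuous hf.continuousOn) (δ/3) hδ3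
  set δ₂ : ℝ := min δ₁ (δ/3) with hδ₂def
  have hδ₂ : 0 < δ₂ := lt_min hδ₁ hδ3
  obtain ⟨t, htK, htfin, htcov⟩ := (totallyBounded_iff_subset.1 K.isCompact.totallyBounded)
    _ (Metric.dist_mem_uniformity hδ₂)
  have hcov' : ∀ p ∈ (K : Set X), ∃ x ∈ t, dist p x < δ₂ := by
    intro p hp
    obtain ⟨-, ⟨y, rfl⟩, -, ⟨hy, rfl⟩, hpy⟩ := htcov hp
    exact ⟨y, hy, hpy⟩
  have htne : t.Nonempty := by
    obtain ⟨p, hp⟩ := K.nonempty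
    obtain ⟨x, hx, -⟩ := hcov' p hp
    exact ⟨x, hx⟩
  have hf3 : ∀ p ∈ (K : Set X), ∀ x ∈ t, dist p x < δ₂ → dist (f p) (f x) < δ/3 :=
    fun p hp x hx hd => hu p hp x (htK hx) (lt_of_lt_of_le hd (min_le_left _ _))
  have hδ₂3 : δ₂ ≤ δ/3 := min_le_right _ _
  choose n hn c hc0 hcn hchain using fun x : X => h x (δ/3) hδ3
  set N : ℕ := ∏ x ∈ htfin.toFinset, n x with hNdef
  have hN : 0 < N := Finset.prod_pos fun x _ => hn x
  set c' : X → ℕ → X := fun x j => c x (j % n x) with hc'def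
  have hc'0 : ∀ x, c' x 0 = x := fun x => by simp [hc'def, hc0 x]
  have hc'N : ∀ x ∈ t, c' x N = x := by
    intro x hx
    have hdvd : n x ∣ N := Finset.dvd_prod_of_mem n (htfin.mem_toFinset.2 hx)
    simp [hc'def, Nat.mod_eq_zero_of_dvd hdvd, hc0 x]
  have hc'chain : ∀ x, ∀ j : ℕ, dist (f (c' x j)) (c' x (j + 1)) < δ/3 := by
    intro x j
    have hper : c x (n x) = c x 0 := by rw [hcn x, hc0 x]
    exact mod_chain f (δ/3) (hn x) (hchain x) hper j
  have hfinim : ∀ j : ℕ, ((fun x => c' x j) '' t).Finite := fun j => htfin.image _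
  set D : ℕ → TopologicalSpace.NonemptyCompacts X := fun j =>
    ⟨⟨(fun x => c' x j) '' t, (hfinim j).isCompact⟩, htne.image _⟩ with hDdef
  set C : ℕ → TopologicalSpace.NonemptyCompacts X := fun j =>
    if j = 0 ∨ j = N then K else D j with hCdef
  have hC0 : C 0 = K := by simp [hCdef]
  have hCN : C N = K := by simp [hCdef]
  have hCcoe : ∀ j : ℕ, ¬(j = 0 ∨ j = N) → (C j : Set X) = (fun x => c' x j) '' t := by
    intro j hj
    simp only [hCdef, if_neg hj, hDdef]
    rfl
  have hCcoeK : ∀ j : ℕ, (j = 0 ∨ j = N) → (C j : Set X) = (K : Set X) := by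
    intro j hj
    simp only [hCdef, if_pos hj]
  have hmem : ∀ x ∈ t, ∀ j : ℕ, 1 ≤ j → j ≤ N → c' x j ∈ (C j : Set X) := by
    intro x hx j h1 h2
    by_cases hjN : j = N
    · subst hjN
      rw [hCcoeK N (Or.inr rfl), hc'N x hx]
      exact htK hx
    · have hne : ¬(j = 0 ∨ j = N) := by omega
      rw [hCcoe j hne]
      exact ⟨x, hx, rfl⟩
  refine ⟨N, hN, C, hC0, hCN, ?_⟩
  intro j hj
  have goal_eq : dist (barMap f hf (C j)) (C (j+1)) =
      Metric.hausdorffDist (f '' (C j : Set X)) ((C (j+1)) : Set X) := rfl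
  rw [goal_eq]
  have h23 : (0:ℝ) ≤ 2*δ/3 := by linarith
  refine lt_of_le_of_lt (Metric.hausdorffDist_le_of_mem_dist h23 ?_ ?_) (by linarith)
  · -- forward direction
    intro y hy
    by_cases hj0 : j = 0
    · subst hj0
      rw [hCcoeK 0 (Or.inl rfl)] at hy
      obtain ⟨p, hp, rfl⟩ := hy
      obtain ⟨x, hx, hpx⟩ := hcov' p hp
      refine ⟨c' x 1, hmem x hx 1 le_rfl hN, ?_⟩
      have h1 : dist (f p) (f x) < δ/3 := hf3 p hp x hx hpx
      have h2 : dist (f x) (c' x 1) < δ/3 := by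
        have := hc'chain x 0; rwa [hc'0 x] at this
      calc dist (f p) (c' x 1) ≤ dist (f p) (f x) + dist (f x) (c' x 1) := dist_triangle _ _ _
        _ ≤ 2*δ/3 := by linarith
    · have hne : ¬(j = 0 ∨ j = N) := by omega
      rw [hCcoe j hne] at hy
      obtain ⟨w, ⟨x, hx, rfl⟩, rfl⟩ := hy
      exact ⟨c' x (j+1), hmem x hx (j+1) (by omega) (by omega),
        le_of_lt (lt_of_lt_of_le (hc'chain x j) (by linarith))⟩
  · -- backward direction
    intro z hz
    by_cases hjN : j + 1 = N
    · rw [hCcoeK (j+1) (Or.inr hjN)] at hz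
      obtain ⟨x, hx, hzx⟩ := hcov' z hz
      have hcmem : c' x j ∈ (C j : Set X) := by
        by_cases hj0 : j = 0
        · subst hj0
          rw [hCcoeK 0 (Or.inl rfl), hc'0 x]
          exact htK hx
        · exact hmem x hx j (by omega) (by omega)
      refine ⟨f (c' x j), Set.mem_image_of_mem f hcmem, ?_⟩
      have h1 : dist (f (c' x j)) (c' x (j+1)) < δ/3 := hc'chain x j
      have h2 : c' x (j+1) = x := by rw [hjN]; exact hc'N x hx
      rw [h2] at h1
      calc dist z (f (c' x j)) ≤ dist z x + dist x (f (c' x j)) := dist_triangle _ _ _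
        _ ≤ 2*δ/3 := by
          rw [dist_comm x (f (c' x j))]
          linarith [lt_of_lt_of_le hzx hδ₂3]
    · have hne : ¬(j + 1 = 0 ∨ j + 1 = N) := by omega
      rw [hCcoe (j+1) hne] at hz
      obtain ⟨x, hx, rfl⟩ := hz
      have hcmem : c' x j ∈ (C j : Set X) := by
        by_cases hj0 : j = 0
        · subst hj0
          rw [hCcoeK 0 (Or.inl rfl), hc'0 x]
          exact htK hx
        · exact hmem x hx j (by omega) (by omega)
      refine ⟨f (c' x j), Set.mem_image_of_mem f hcmem, ?_⟩
      rw [dist_comm]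
      exact le_of_lt (lt_of_lt_of_le (hc'chain x j) (by linarith))

/-- If `(X,f)` is chain recurrent, then every finite product of the hyperspace
system, `(K(X)^N, (f̄)_(N))`, is chain recurrent. -/
theorem chainRecurrent_imp_hyperspace_prod_chainRecurrent {X : Type*} [MetricSpace X]
    (f : X → X) (hf : Continuous f) (h : ChainRecurrent f) :
    ∀ N : ℕ, 1 ≤ N → ChainRecurrent (prodMap (barMap f hf) N) := by
  intro N _
  exact prod_chainRecurrent (hyper_chainRecurrent hf h) N
end
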